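/- arXiv:2509.24143 — 3 statements merged into one kernel-verified Lean document; each statement's English description precedes it below -/
import Mathlib

section
/- Let κ_g, κ_n be real constants with K := √(κ_n² + κ_g²) > 0. Define the curve X(φ) = ((sin φ)/K, κ_g(1 − cos φ)/K², κ_n(1 − cos φ)/K²) for φ ∈ ℝ. If κ_n = 1/R with R > 0, then for all φ and all κ_g, the point X(φ) lies on the sphere of radius R centered at (0, 0, R), i.e., ‖X(φ) − (0,0,R)‖² = R². -/
/-!
With `u = (1 - cos φ) / K²`, the squared distance to `(0, 0, R)` is
`sin² φ / K² + (κg² + κn²) u² - 2 R κn u + R²`. Since `κg² + κn² = K²` and `R κn = 1`, this is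
`(sin² φ + (1 - cos φ)² - 2 (1 - cos φ)) / K² + R² = R²`.
-/

noncomputable def v3 (a b c : ℝ) : EuclideanSpace ℝ (Fin 3) := WithLp.toLp 2 ![a, b, c]

lemma v3_sub (a b c a' b' c' : ℝ) : v3 a b c - v3 a' b' c' = v3 (a - a') (b - b') (c - c') := by
  ext i
  fin_cases i <;> rfl

lemma norm_v3_sq (a b c : ℝ) : ‖v3 a b c‖ ^ 2 = a ^ 2 + b ^ 2 + c ^ 2 := by
  rw [EuclideanSpace.norm_sq_eq, Fin.sum_univ_three]
  simp [v3]

lemma pitch_curve_dist_sq_identity {κg κn R K : ℝ} (hK : K ^ 2 = κn ^ 2 + κg ^ 2) (hK0 : K ≠ 0)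
    (hRκn : R * κn = 1) (φ : ℝ) :
    (Real.sin φ / K) ^ 2 + (κg * (1 - Real.cos φ) / K ^ 2) ^ 2
      + (κn * (1 - Real.cos φ) / K ^ 2 - R) ^ 2 = R ^ 2 := by
  have hκg : κg ^ 2 = K ^ 2 - κn ^ 2 := by linarith
  field_simp
  linear_combination K ^ 2 * Real.sin_sq_add_cos_sq φ + (1 - Real.cos φ) ^ 2 * hκg
    - 2 * (1 - Real.cos φ) * K ^ 2 * hRκn

theorem pitch_sphere_general (κg κn R : ℝ) (hR : 0 < R) (hκn : κn = 1 / R)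
    (K : ℝ) (hK : K = Real.sqrt (κn ^ 2 + κg ^ 2))
    (X : ℝ → EuclideanSpace ℝ (Fin 3))
    (hX : ∀ φ : ℝ, X φ =
      v3 (Real.sin φ / K) (κg * (1 - Real.cos φ) / K ^ 2) (κn * (1 - Real.cos φ) / K ^ 2)) :
    ∀ φ : ℝ, ‖X φ - v3 0 0 R‖ ^ 2 = R ^ 2 := by
  intro φ
  have hRκn : R * κn = 1 := by rw [hκn, mul_one_div_cancel hR.ne']
  have hK2 : K ^ 2 = κn ^ 2 + κg ^ 2 := by rw [hK, Real.sq_sqrt (by positivity)]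
  have hK0 : K ≠ 0 := by
    rintro rfl
    have hκn0 : κn = 0 := by nlinarith [sq_nonneg κg]
    simp [hκn0] at hRκn
  rw [hX, v3_sub, norm_v3_sq, sub_zero, sub_zero]
  exact pitch_curve_dist_sq_identity hK2 hK0 hRκn φ

/-- Segments with maximal pitch rate `κ_n = 1/R` lie on a sphere of radius `R`
centered at `(0, 0, R)`, for any yaw rate `κ_g`. -/
theorem pitch_sphere (κg κn R : ℝ) (hR : 0 < R) (hκn : κn = 1 / R)
    (K : ℝ) (hK : K = Real.sqrt (κn ^ 2 + κg ^ 2)) (hKpos : 0 < K)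
    (X : ℝ → EuclideanSpace ℝ (Fin 3))
    (hX : ∀ φ : ℝ, X φ =
      v3 (Real.sin φ / K) (κg * (1 - Real.cos φ) / K ^ 2) (κn * (1 - Real.cos φ) / K ^ 2)) :
    ∀ φ : ℝ, ‖X φ - v3 0 0 R‖ ^ 2 = R ^ 2 :=
  pitch_sphere_general κg κn R hR hκn K hK X hX
end

section
/- Let X_sp, T_sp, N_sp : ℝ → ℝ³ satisfy dX_sp/ds = T_sp, dT_sp/ds = −(1/R̄²) X_sp + u_g N_sp, dN_sp/ds = −u_g T_sp, where u_g : ℝ → ℝ is continuous and R̄ > 0. If ‖X_sp(0)‖ = R̄, then ‖X_sp(s)‖ = R̄ for all s, i.e., the curve remains on the sphere of radius R̄ centered at the origin. -/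
open scoped InnerProductSpace

noncomputable def cross3 (p q : EuclideanSpace ℝ (Fin 3)) : EuclideanSpace ℝ (Fin 3) :=
  v3 (p 1 * q 2 - p 2 * q 1) (p 2 * q 0 - p 0 * q 2) (p 0 * q 1 - p 1 * q 0)

/-!
The frame `e = (X / R̄, T, N)` obeys `e' = Ω e` with the skew-symmetric generator
`Ω = [[0, 1/R̄, 0], [-1/R̄, 0, u_g], [0, -u_g, 0]]`. Hence its Gram matrix satisfies
`G' = Ω G + G Ωᵀ = Ω (G - 1) + (G - 1) Ωᵀ`, and the squared Frobenius norm of `G - 1` has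
derivative `2 tr((G - 1) (Ω (G - 1) + (G - 1) Ωᵀ)ᵀ)`, a sum of traces of a symmetric matrix
times a skew one, i.e. zero. The initial conditions make `e 0` orthonormal, so `G - 1` vanishes
for all time; in particular `‖X / R̄‖ = 1`.
-/

open Matrix

namespace Matrix

variable {ι R : Type*} [Fintype ι]

theorem sum_mul_apply_eq_trace_mul_transpose [NonUnitalNonAssocSemiring R] (A B : Matrix ι ι R) :
    ∑ i, ∑ j, A i j * B i j = trace (A * Bᵀ) := by
  simp [trace, mul_apply]

section CharZero

variable [CommRing R] [NoZeroDivisors R] [CharZero R]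

theorem IsSymm.trace_mul_eq_zero {S Ω : Matrix ι ι R} (hS : S.IsSymm) (hΩ : Ωᵀ = -Ω) :
    trace (S * Ω) = 0 := by
  have h := trace_transpose (S * Ω)
  rw [transpose_mul, hΩ, hS.eq, neg_mul, trace_neg, trace_mul_comm] at h
  exact CharZero.eq_neg_self_iff.1 h.symm

theorem sum_mul_skew_mul_add_mul_transpose_eq_zero {Ω : Matrix ι ι R} (hΩ : Ωᵀ = -Ω)
    (D : Matrix ι ι R) : ∑ i, ∑ j, D i j * (Ω * D + D * Ωᵀ) i j = 0 := by
  have hΩ' : Ωᵀᵀ = -Ωᵀ := by rw [transpose_transpose, hΩ, neg_neg]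
  rw [sum_mul_apply_eq_trace_mul_transpose, transpose_add, transpose_mul, transpose_mul,
    transpose_transpose, mul_add, trace_add, ← Matrix.mul_assoc, trace_mul_comm D,
    Matrix.mul_assoc Ω, trace_mul_comm Ω, (isSymm_mul_transpose_self D).trace_mul_eq_zero hΩ',
    (isSymm_transpose_mul_self D).trace_mul_eq_zero hΩ, add_zero]

end CharZero

theorem sum_sq_apply_eq_zero_iff [CommRing R] [LinearOrder R] [IsStrictOrderedRing R]
    (A : Matrix ι ι R) : ∑ i, ∑ j, A i j ^ 2 = 0 ↔ A = 0 := by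
  refine ⟨fun h => ?_, fun h => by simp [h]⟩
  ext i j
  have hi := (Finset.sum_eq_zero_iff_of_nonneg fun i _ =>
    Finset.sum_nonneg fun j _ => sq_nonneg (A i j)).1 h i (Finset.mem_univ i)
  exact pow_eq_zero_iff two_ne_zero |>.1 <|
    (Finset.sum_eq_zero_iff_of_nonneg fun j _ => sq_nonneg (A i j)).1 hi j (Finset.mem_univ j)

end Matrix

section SkewFrame

variable {ι E : Type*} [Fintype ι] [NormedAddCommGroup E] [InnerProductSpace ℝ E]
  {e : ℝ → ι → E}

theorem hasDerivAt_gram_apply {Ω : Matrix ι ι ℝ} {t : ℝ}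
    (he : ∀ i, HasDerivAt (fun s => e s i) (∑ k, Ω i k • e t k) t) (i j : ι) :
    HasDerivAt (fun s => gram ℝ (e s) i j) ((Ω * gram ℝ (e t) + gram ℝ (e t) * Ωᵀ) i j) t := by
  refine ((he i).inner ℝ (he j)).congr_deriv ?_
  simp only [inner_sum, sum_inner, real_inner_smul_left, real_inner_smul_right, Matrix.add_apply,
    mul_apply, gram_apply, transpose_apply]
  rw [add_comm]
  simp only [mul_comm]

variable [DecidableEq ι]

theorem hasDerivAt_sum_sq_gram_sub_one {Ω : Matrix ι ι ℝ} {t : ℝ} (hΩ : Ωᵀ = -Ω)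
    (he : ∀ i, HasDerivAt (fun s => e s i) (∑ k, Ω i k • e t k) t) :
    HasDerivAt (fun s => ∑ i, ∑ j, (gram ℝ (e s) - 1) i j ^ 2) 0 t := by
  set D := gram ℝ (e t) - 1
  have hgen : Ω * gram ℝ (e t) + gram ℝ (e t) * Ωᵀ = Ω * D + D * Ωᵀ := by
    simp only [D, Matrix.mul_sub, Matrix.sub_mul, Matrix.mul_one, Matrix.one_mul, hΩ]
    abel
  refine (HasDerivAt.fun_sum (u := Finset.univ) fun i _ =>
    HasDerivAt.fun_sum (u := Finset.univ) fun j _ =>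
      ((hasDerivAt_gram_apply he i j).sub_const ((1 : Matrix ι ι ℝ) i j)).pow 2).congr_deriv ?_
  change ∑ i, ∑ j, ((2 : ℕ) : ℝ) * D i j ^ 1 * _ = 0
  simp only [hgen, Nat.cast_ofNat, pow_one, mul_assoc, ← Finset.mul_sum,
    sum_mul_skew_mul_add_mul_transpose_eq_zero hΩ, mul_zero]

theorem orthonormal_of_hasDerivAt_skew (Ω : ℝ → Matrix ι ι ℝ) (hΩ : ∀ t, (Ω t)ᵀ = -Ω t)
    (he : ∀ t i, HasDerivAt (fun s => e s i) (∑ k, Ω t i k • e t k) t) {t₀ : ℝ}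
    (h₀ : Orthonormal ℝ (e t₀)) (t : ℝ) : Orthonormal ℝ (e t) := by
  have hQ (s : ℝ) := hasDerivAt_sum_sq_gram_sub_one (hΩ s) (he s)
  have hconst := is_const_of_deriv_eq_zero (fun s => (hQ s).differentiableAt)
    (fun s => (hQ s).deriv) t t₀
  rw [← gram_eq_one_iff_orthonormal, ← sub_eq_zero, ← sum_sq_apply_eq_zero_iff] at h₀ ⊢
  exact hconst.trans h₀

end SkewFrame

theorem cross3_eq_toLp_crossProduct (p q : EuclideanSpace ℝ (Fin 3)) :
    cross3 p q = WithLp.toLp 2 (p.ofLp ⨯₃ q.ofLp) := rfl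

theorem cross3_smul_left (c : ℝ) (p q : EuclideanSpace ℝ (Fin 3)) :
    cross3 (c • p) q = c • cross3 p q := by
  simp only [cross3_eq_toLp_crossProduct, WithLp.ofLp_smul, LinearMap.map_smul₂, WithLp.toLp_smul]

theorem inner_self_cross3 (p q : EuclideanSpace ℝ (Fin 3)) : ⟪p, cross3 p q⟫_ℝ = 0 := by
  simp [cross3_eq_toLp_crossProduct, EuclideanSpace.inner_eq_star_dotProduct, dotProduct_comm]

theorem inner_cross3_self (p q : EuclideanSpace ℝ (Fin 3)) : ⟪q, cross3 p q⟫_ℝ = 0 := by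
  simp [cross3_eq_toLp_crossProduct, EuclideanSpace.inner_eq_star_dotProduct, dotProduct_comm]

theorem norm_cross3_sq (p q : EuclideanSpace ℝ (Fin 3)) :
    ‖cross3 p q‖ ^ 2 = ‖p‖ ^ 2 * ‖q‖ ^ 2 - ⟪p, q⟫_ℝ ^ 2 := by
  simp only [← real_inner_self_eq_norm_sq, cross3_eq_toLp_crossProduct,
    EuclideanSpace.inner_eq_star_dotProduct, star_trivial, cross_dot_cross, dotProduct_comm q.ofLp]
  ring

theorem orthonormal_cross3 {p q : EuclideanSpace ℝ (Fin 3)} (hp : ‖p‖ = 1) (hq : ‖q‖ = 1)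
    (hpq : ⟪p, q⟫_ℝ = 0) : Orthonormal ℝ ![p, q, cross3 p q] := by
  have hr : ‖cross3 p q‖ = 1 := by
    rw [← pow_eq_one_iff_of_nonneg (norm_nonneg _) two_ne_zero, norm_cross3_sq, hp, hq, hpq]
    norm_num
  have hqp : ⟪q, p⟫_ℝ = 0 := by rw [real_inner_comm, hpq]
  have hrp : ⟪cross3 p q, p⟫_ℝ = 0 := by rw [real_inner_comm, inner_self_cross3]
  have hrq : ⟪cross3 p q, q⟫_ℝ = 0 := by rw [real_inner_comm, inner_cross3_self]
  rw [orthonormal_iff_ite]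
  intro i j
  fin_cases i <;> fin_cases j <;>
    simp [hp, hq, hr, hpq, hqp, hrp, hrq, inner_self_cross3, inner_cross3_self]

theorem sabban_stays_on_sphere_general (Rb : ℝ) (hRb : 0 < Rb)
    (X T N : ℝ → EuclideanSpace ℝ (Fin 3)) (ug : ℝ → ℝ)
    (hX : ∀ s : ℝ, HasDerivAt X (T s) s)
    (hT : ∀ s : ℝ, HasDerivAt T (-(1 / Rb ^ 2) • X s + ug s • N s) s)
    (hN : ∀ s : ℝ, HasDerivAt N (-(ug s) • T s) s)
    (hX0 : ‖X 0‖ = Rb) (hT0 : ‖T 0‖ = 1) (hXT0 : ⟪X 0, T 0⟫_ℝ = 0)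
    (hN0 : N 0 = (1 / Rb) • cross3 (X 0) (T 0)) :
    ∀ s : ℝ, ‖X s‖ = Rb := by
  set e : ℝ → Fin 3 → EuclideanSpace ℝ (Fin 3) := fun s => ![(1 / Rb) • X s, T s, N s]
  set Ω : ℝ → Matrix (Fin 3) (Fin 3) ℝ := fun s =>
    !![0, 1 / Rb, 0; -(1 / Rb), 0, ug s; 0, -ug s, 0]
  have hΩ (s : ℝ) : (Ω s)ᵀ = -Ω s := by
    ext i j
    fin_cases i <;> fin_cases j <;> simp [Ω]
  have he (s : ℝ) (i : Fin 3) : HasDerivAt (fun t => e t i) (∑ k, Ω s i k • e s k) s := by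
    fin_cases i
    · refine ((hX s).const_smul (1 / Rb)).congr_deriv ?_
      simp [e, Ω, Fin.sum_univ_three]
    · refine (hT s).congr_deriv ?_
      simp [e, Ω, Fin.sum_univ_three, smul_smul, ← sq]
    · refine (hN s).congr_deriv ?_
      simp [e, Ω, Fin.sum_univ_three]
  have h₀ : Orthonormal ℝ (e 0) := by
    simp only [e, hN0, ← cross3_smul_left]
    refine orthonormal_cross3 ?_ hT0 ?_
    · rw [norm_smul, hX0, Real.norm_of_nonneg (by positivity), one_div_mul_cancel hRb.ne']
    · rw [real_inner_smul_left, hXT0, mul_zero]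
  intro s
  have h : ‖(1 / Rb) • X s‖ = 1 := (orthonormal_of_hasDerivAt_skew Ω hΩ he h₀ s).1 0
  rwa [norm_smul, Real.norm_of_nonneg (by positivity), one_div_mul_eq_div,
    div_eq_one_iff_eq hRb.ne'] at h

/-- Solutions of the generalized Sabban frame equations on the sphere of radius
`R̄` remain on that sphere: `‖X_sp(s)‖ = R̄` for all `s`. -/
theorem sabban_stays_on_sphere (Rb : ℝ) (hRb : 0 < Rb)
    (X T N : ℝ → EuclideanSpace ℝ (Fin 3)) (ug : ℝ → ℝ) (hug : Continuous ug)
    (hX : ∀ s : ℝ, HasDerivAt X (T s) s)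
    (hT : ∀ s : ℝ, HasDerivAt T (-(1 / Rb ^ 2) • X s + ug s • N s) s)
    (hN : ∀ s : ℝ, HasDerivAt N (-(ug s) • T s) s)
    (hX0 : ‖X 0‖ = Rb) (hT0 : ‖T 0‖ = 1) (hXT0 : ⟪X 0, T 0⟫_ℝ = 0)
    (hN0 : N 0 = (1 / Rb) • cross3 (X 0) (T 0)) :
    ∀ s : ℝ, ‖X s‖ = Rb :=
  sabban_stays_on_sphere_general Rb hRb X T N ug hX hT hN hX0 hT0 hXT0 hN0
end

section
/- Let r_i, r_f ∈ ℝ³ with d := ‖r_f − r_i‖ satisfying 2R̄ ≤ d, and let α = arccos(2R̄/d). Set k = (r_f − r_i)/d, A = r_i + R̄ cos(α) k, and B = r_f − R̄ cos(α) k. Let x, y be unit vectors with {x, y, k} orthonormal. For θ ∈ ℝ define X_ic(θ) = A + R̄ sin α (cos θ x + sin θ y) and X_oc(θ) = B + R̄ sin α (cos(θ+π) x + sin(θ+π) y). Then ‖X_ic(θ) − r_i‖ = R̄, ‖X_oc(θ) − r_f‖ = R̄, and the vector X_oc(θ) − X_ic(θ) is orthogonal to both X_ic(θ) − r_i and X_oc(θ)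 − r_f. -/
open scoped InnerProductSpace

/-!
Put `u θ = cos θ • x + sin θ • y` and `v = R̄ • (cos α • k + sin α • u θ)`. Since `k, x, y` are
orthonormal, `v` has length `R̄`, and by construction `X_ic(θ) = r_i + v`, `X_oc(θ) = r_f - v`.
The chord is then `(r_f - r_i) - 2 • v`, which is orthogonal to `v` exactly when
`⟪r_f - r_i, v⟫ = 2 R̄²`; this is `d · R̄ cos α = 2 R̄²`, the defining property of `α`.
-/

section Orthogonal

variable {E : Type*} [NormedAddCommGroup E] [InnerProductSpace ℝ E]

theorem norm_smul_add_smul_eq_one {e₁ e₂ : E} (h₁ : ‖e₁‖ = 1) (h₂ : ‖e₂‖ = 1)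
    (h₁₂ : ⟪e₁, e₂⟫_ℝ = 0) {a b : ℝ} (hab : a ^ 2 + b ^ 2 = 1) :
    ‖a • e₁ + b • e₂‖ = 1 := by
  have horth : ⟪a • e₁, b • e₂⟫_ℝ = 0 := by
    rw [real_inner_smul_left, real_inner_smul_right, h₁₂, mul_zero, mul_zero]
  have hsq : ‖a • e₁ + b • e₂‖ ^ 2 = 1 := by
    rw [sq, norm_add_sq_eq_norm_sq_add_norm_sq_real horth, norm_smul, norm_smul, h₁, h₂,
      mul_one, mul_one, Real.norm_eq_abs, Real.norm_eq_abs, abs_mul_abs_self, abs_mul_abs_self,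
      ← sq, ← sq, hab]
  rwa [pow_eq_one_iff_of_nonneg (norm_nonneg _) two_ne_zero] at hsq

theorem inner_cos_smul_add_sin_smul_eq_zero {k x y : E} (hxk : ⟪x, k⟫_ℝ = 0)
    (hyk : ⟪y, k⟫_ℝ = 0) (θ : ℝ) :
    ⟪k, Real.cos θ • x + Real.sin θ • y⟫_ℝ = 0 := by
  rw [inner_add_right, real_inner_smul_right, real_inner_smul_right, real_inner_comm x,
    real_inner_comm y, hxk, hyk, mul_zero, mul_zero, add_zero]

theorem inner_sub_two_smul_self_eq_zero {w v : E} (h : ⟪w, v⟫_ℝ = 2 * ‖v‖ ^ 2) :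
    ⟪w - (2 : ℝ) • v, v⟫_ℝ = 0 := by
  rw [inner_sub_left, real_inner_smul_left, real_inner_self_eq_norm_sq, h, sub_self]

end Orthogonal

theorem Real.cos_arccos_div {a d : ℝ} (ha : 0 ≤ a) (had : a ≤ d) :
    Real.cos (Real.arccos (a / d)) = a / d := by
  apply Real.cos_arccos
  · linarith [div_nonneg ha (ha.trans had)]
  · rcases (ha.trans had).eq_or_lt with rfl | hd
    · simp
    · rwa [div_le_one hd]

/-- The tangency points `X_ic(θ)`, `X_oc(θ)` of the cross-tangent plane lie on
the respective spheres of radius `R̄`, and the chord joining them is orthogonal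
to both radius vectors at the tangency points. -/
theorem cross_tangent_points (Rb : ℝ) (hRb : 0 < Rb)
    (ri rf : EuclideanSpace ℝ (Fin 3)) (d : ℝ) (hd : d = ‖rf - ri‖)
    (hdist : 2 * Rb ≤ d)
    (α : ℝ) (hα : α = Real.arccos (2 * Rb / d))
    (k x y : EuclideanSpace ℝ (Fin 3))
    (hk : k = (1 / d) • (rf - ri))
    (hx : ‖x‖ = 1) (hy : ‖y‖ = 1)
    (hxy : ⟪x, y⟫_ℝ = 0) (hxk : ⟪x, k⟫_ℝ = 0) (hyk : ⟪y, k⟫_ℝ = 0)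
    (A B : EuclideanSpace ℝ (Fin 3))
    (hA : A = ri + (Rb * Real.cos α) • k) (hB : B = rf - (Rb * Real.cos α) • k)
    (Xic Xoc : ℝ → EuclideanSpace ℝ (Fin 3))
    (hXic : ∀ θ : ℝ, Xic θ =
      A + (Rb * Real.sin α * Real.cos θ) • x + (Rb * Real.sin α * Real.sin θ) • y)
    (hXoc : ∀ θ : ℝ, Xoc θ =
      B + (Rb * Real.sin α * Real.cos (θ + Real.pi)) • x
        + (Rb * Real.sin α * Real.sin (θ + Real.pi)) • y) :
    ∀ θ : ℝ, ‖Xic θ - ri‖ = Rb ∧ ‖Xoc θ - rf‖ = Rb ∧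
      ⟪Xoc θ - Xic θ, Xic θ - ri⟫_ℝ = 0 ∧ ⟪Xoc θ - Xic θ, Xoc θ - rf⟫_ℝ = 0 := by
  intro θ
  have hd0 : 0 < d := by linarith
  have hcos : Real.cos α = 2 * Rb / d := hα ▸ Real.cos_arccos_div (by positivity) hdist
  have hrfri : rf - ri = d • k := by rw [hk, smul_smul, mul_one_div_cancel hd0.ne', one_smul]
  have hk1 : ‖k‖ = 1 := by
    rw [hk, norm_smul, ← hd, Real.norm_of_nonneg (by positivity), one_div_mul_cancel hd0.ne']
  set u := Real.cos θ • x + Real.sin θ • y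
  have hu1 : ‖u‖ = 1 := norm_smul_add_smul_eq_one hx hy hxy (Real.cos_sq_add_sin_sq θ)
  have hku : ⟪k, u⟫_ℝ = 0 := inner_cos_smul_add_sin_smul_eq_zero hxk hyk θ
  set v := Rb • (Real.cos α • k + Real.sin α • u)
  have hv : ‖v‖ = Rb := by
    rw [norm_smul, norm_smul_add_smul_eq_one hk1 hu1 hku (Real.cos_sq_add_sin_sq α),
      mul_one, Real.norm_of_nonneg hRb.le]
  have hic : Xic θ - ri = v := by rw [hXic, hA]; module
  have hoc : Xoc θ - rf = -v := by rw [hXoc, hB, Real.cos_add_pi, Real.sin_add_pi]; module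
  have hchord : Xoc θ - Xic θ = (rf - ri) - (2 : ℝ) • v := by
    rw [← sub_sub_sub_cancel_right _ _ ri, hic, ← sub_add_cancel (Xoc θ) rf, hoc]; module
  have hproj : ⟪rf - ri, v⟫_ℝ = 2 * ‖v‖ ^ 2 := by
    rw [hrfri, hv, real_inner_smul_left, real_inner_smul_right, inner_add_right,
      real_inner_smul_right, real_inner_smul_right, real_inner_self_eq_norm_sq, hk1, hku, hcos,
      mul_zero, add_zero]
    field_simp
  have htangent := inner_sub_two_smul_self_eq_zero hproj
  refine ⟨hic ▸ hv, by rw [hoc, norm_neg, hv], ?_, ?_⟩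
  · rwa [hchord, hic]
  · rw [hchord, hoc, inner_neg_right, htangent, neg_zero]
end
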